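/- If $m(\xi,\eta) \geq 0$ satisfies $m \leq 1 + Wm$ pointwise, where $(Wm)(\xi,\eta) = \int_{-\infty}^{\xi} ds \int_0^{\eta} dt\, \mu(s+t) m(s,t)$ with $\mu \geq 0$ locally integrable, and the iteration converges, then $m(\xi,\eta) \leq 1 + \sum_{n=1}^{\infty} \frac{\eta^n \mu_1(\xi+\eta)^n}{(n!)^2}$ where $\mu_1(\xi) = \int_{-\infty}^{\xi} \mu(s)\,ds$. -/

import Mathlib

/-!
Iterating `m ≤ 1 + W m` gives `m ≤ ∑_{k<n} P_k + Wⁿ m` with `P_k(s,t) = t^k μ₁(s+t)^k / (k!)²`,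
because `W P_k ≤ P_{k+1}`: integrating `μ(s+t) P_k(s,t)` over `s ≤ ξ` first gives
`t^k μ₁(ξ+t)^{k+1} / ((k+1) (k!)²)`, by `∫_{-∞}^x μ μ₁^k = μ₁(x)^{k+1} / (k+1)`, and the
`t`-integral over `(0, η]` of this is at most `P_{k+1}(ξ,η)`. Then let `n → ∞`, as `Wⁿ m → 0`.

Since `μ` is merely locally integrable, `μ₁` need not be differentiable, and the power identity
comes from Fubini on the triangle `v ≤ u ≤ x`, which turns it into a linear equation for the
integral. Bochner integrals of non-integrable functions vanish, so `W` is linear and monotone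
only on functions integrable over the boxes `(-∞, ξ] × (0, η]`; the iterates `Wⁿ m` are kept in
the class `StripAdmissible`, which `W` preserves.
-/

open MeasureTheory Set Filter

theorem aestronglyMeasurable_of_integrableOn_Iic {g : ℝ → ℝ}
    (hgi : ∀ A : ℝ, IntegrableOn g (Iic A)) : AEStronglyMeasurable g volume := by
  have hU : (⋃ n : ℕ, Iic (n : ℝ)) = univ :=
    iUnion_eq_univ_iff.2 fun x => (exists_nat_ge x).imp fun _ => id
  rw [← Measure.restrict_univ (μ := volume), ← hU, aestronglyMeasurable_iUnion_iff]
  exact fun n => (hgi n).aestronglyMeasurable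

theorem integral_Icc_eq_integral_Iic_sub {φ : ℝ → ℝ} {a b : ℝ} (hab : a ≤ b)
    (hφ : IntegrableOn φ (Iic b)) :
    ∫ u in Icc a b, φ u = (∫ u in Iic b, φ u) - ∫ u in Iic a, φ u := by
  rw [intervalIntegral.integral_Iic_sub_Iic (hφ.mono_set (Iic_subset_Iic.2 hab)) hφ,
    intervalIntegral.integral_of_le hab, integral_Icc_eq_integral_Ioc]

theorem integral_Iic_comp_add_right (G : ℝ → ℝ) (ξ t : ℝ) :
    ∫ s in Iic ξ, G (s + t) = ∫ u in Iic (ξ + t), G u := by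
  have := (measurePreserving_add_right volume t).setIntegral_preimage_emb
    (measurableEmbedding_addRight t) G (Iic (ξ + t))
  rwa [preimage_add_const_Iic, add_sub_cancel_right] at this

theorem integral_Iic_mul_integral_Iic_eq {φ ψ : ℝ → ℝ} {A : ℝ}
    (hφ : IntegrableOn φ (Iic A)) (hψ : IntegrableOn ψ (Iic A)) :
    ∫ u in Iic A, φ u * ∫ v in Iic u, ψ v = ∫ v in Iic A, ψ v * ∫ u in Icc v A, φ u := by
  set H : ℝ → ℝ → ℝ := fun u v => if v ≤ u then φ u * ψ v else 0
  have hH_eq : Function.uncurry H =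
      {p : ℝ × ℝ | p.2 ≤ p.1}.indicator fun p => φ p.1 * ψ p.2 := by
    ext ⟨u, v⟩
    simp [H, indicator_apply]
  have hH : Integrable (Function.uncurry H)
      ((volume.restrict (Iic A)).prod (volume.restrict (Iic A))) := by
    rw [hH_eq]
    exact (hφ.norm.mul_prod hψ.norm).mono'
      ((hφ.1.comp_fst.mul hψ.1.comp_snd).indicator
        (measurableSet_le measurable_snd measurable_fst))
      (Eventually.of_forall fun p => (norm_indicator_le_norm_self _ _).trans_eq (norm_mul _ _))
  have inner_v : ∀ u ∈ Iic A, ∫ v in Iic A, H u v = φ u * ∫ v in Iic u, ψ v := by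
    intro u hu
    rw [show H u = (Iic u).indicator fun v => φ u * ψ v from
        funext fun v => by simp [H, indicator_apply],
      setIntegral_indicator measurableSet_Iic, inter_eq_right.2 (Iic_subset_Iic.2 hu),
      integral_const_mul]
  have inner_u : ∀ v ∈ Iic A, ∫ u in Iic A, H u v = ψ v * ∫ u in Icc v A, φ u := by
    intro v _
    rw [show (fun u => H u v) = (Ici v).indicator fun u => ψ v * φ u from
        funext fun u => by simp [H, indicator_apply, mul_comm],
      setIntegral_indicator measurableSet_Ici, inter_comm, Ici_inter_Iic, integral_const_mul]
  rw [← setIntegral_congr_fun measurableSet_Iic inner_v,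
    ← setIntegral_congr_fun measurableSet_Iic inner_u]
  exact integral_integral_swap hH

noncomputable def primitiveIic (g : ℝ → ℝ) (x : ℝ) : ℝ := ∫ s in Iic x, g s

section Primitive

variable {g : ℝ → ℝ}

theorem primitiveIic_nonneg (hg0 : ∀ x, 0 ≤ g x) (x : ℝ) : 0 ≤ primitiveIic g x :=
  setIntegral_nonneg measurableSet_Iic fun y _ => hg0 y

variable (hg0 : ∀ x, 0 ≤ g x) (hgi : ∀ A : ℝ, IntegrableOn g (Iic A))
include hg0 hgi

theorem primitiveIic_mono : Monotone (primitiveIic g) := by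
  intro a b hab
  have hsplit := integral_Icc_eq_integral_Iic_sub hab (hgi b)
  have : 0 ≤ ∫ u in Icc a b, g u := setIntegral_nonneg measurableSet_Icc fun x _ => hg0 x
  simp only [primitiveIic]
  linarith

theorem integrableOn_mul_primitiveIic_pow (k : ℕ) (A : ℝ) :
    IntegrableOn (fun u => g u * primitiveIic g u ^ k) (Iic A) := by
  refine (hgi A).mul_bdd (c := primitiveIic g A ^ k)
    ((primitiveIic_mono hg0 hgi).measurable.pow_const k).aestronglyMeasurable ?_
  filter_upwards [ae_restrict_mem measurableSet_Iic] with u hu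
  rw [Real.norm_of_nonneg (pow_nonneg (primitiveIic_nonneg hg0 u) k)]
  exact pow_le_pow_left₀ (primitiveIic_nonneg hg0 u) (primitiveIic_mono hg0 hgi hu) k

theorem integral_mul_primitiveIic_pow (k : ℕ) (A : ℝ) :
    ∫ u in Iic A, g u * primitiveIic g u ^ k = primitiveIic g A ^ (k + 1) / (k + 1) := by
  induction k generalizing A with
  | zero => simp [primitiveIic]
  | succ k ih =>
    have hswap := integral_Iic_mul_integral_Iic_eq
      (integrableOn_mul_primitiveIic_pow hg0 hgi k A) (hgi A)
    set F := primitiveIic g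
    set L := ∫ u in Iic A, g u * F u ^ (k + 1)
    have hlhs : ∫ u in Iic A, g u * F u ^ k * ∫ v in Iic u, g v = L := by
      refine integral_congr_ae (Eventually.of_forall fun u => ?_)
      simp only [F, primitiveIic]
      ring
    have hinner : ∀ v ∈ Iic A, g v * ∫ u in Icc v A, g u * F u ^ k =
        F A ^ (k + 1) / (k + 1) * g v - g v * F v ^ (k + 1) / (k + 1) := by
      intro v hv
      rw [integral_Icc_eq_integral_Iic_sub hv (integrableOn_mul_primitiveIic_pow hg0 hgi k A),
        ih, ih]
      ring
    have hrhs : ∫ v in Iic A, g v * ∫ u in Icc v A, g u * F u ^ k =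
        (F A ^ (k + 1) * F A - L) / (k + 1) := by
      rw [setIntegral_congr_fun measurableSet_Iic hinner,
        integral_sub ((hgi A).const_mul _)
          ((integrableOn_mul_primitiveIic_pow hg0 hgi (k + 1) A).div_const _),
        integral_const_mul, integral_div]
      change F A ^ (k + 1) / (k + 1) * F A - L / (k + 1) = _
      ring
    rw [hlhs, hrhs] at hswap
    have hk : (0 : ℝ) < k + 1 := by positivity
    push_cast
    field_simp at hswap ⊢
    linarith [pow_succ (F A) (k + 1)]

end Primitive

noncomputable def volterra (g : ℝ → ℝ) (f : ℝ → ℝ → ℝ) (ξ η : ℝ) : ℝ :=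
  ∫ s in Iic ξ, ∫ t in (0 : ℝ)..η, g (s + t) * f s t

def StripAdmissible (f : ℝ → ℝ → ℝ) : Prop :=
  AEStronglyMeasurable (Function.uncurry f) (volume.restrict (univ ×ˢ Ioi (0 : ℝ))) ∧
    ∀ A B : ℝ, ∃ M, ∀ s ≤ A, ∀ t ∈ Ioc (0 : ℝ) B, |f s t| ≤ M

noncomputable def gronwallTerm (g : ℝ → ℝ) (k : ℕ) (s t : ℝ) : ℝ :=
  t ^ k * primitiveIic g (s + t) ^ k / (k.factorial : ℝ) ^ 2

@[simp]
theorem gronwallTerm_zero (g : ℝ → ℝ) (s t : ℝ) : gronwallTerm g 0 s t = 1 := by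
  simp [gronwallTerm]

theorem StripAdmissible.add {f₁ f₂ : ℝ → ℝ → ℝ} (hf₁ : StripAdmissible f₁)
    (hf₂ : StripAdmissible f₂) : StripAdmissible fun s t => f₁ s t + f₂ s t := by
  refine ⟨hf₁.1.add hf₂.1, fun A B => ?_⟩
  obtain ⟨M₁, hM₁⟩ := hf₁.2 A B
  obtain ⟨M₂, hM₂⟩ := hf₂.2 A B
  exact ⟨M₁ + M₂, fun s hs t ht =>
    (abs_add_le _ _).trans (add_le_add (hM₁ s hs t ht) (hM₂ s hs t ht))⟩

section Volterra

variable {g : ℝ → ℝ} (hg0 : ∀ x, 0 ≤ g x) (hgi : ∀ A : ℝ, IntegrableOn g (Iic A))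

include hgi in
theorem aestronglyMeasurable_comp_add :
    AEStronglyMeasurable (fun p : ℝ × ℝ => g (p.1 + p.2)) volume :=
  (aestronglyMeasurable_of_integrableOn_Iic hgi).comp_quasiMeasurePreserving
    (quasiMeasurePreserving_add volume volume)

include hg0 in
theorem gronwallTerm_nonneg (k : ℕ) (s : ℝ) {t : ℝ} (ht : 0 ≤ t) : 0 ≤ gronwallTerm g k s t := by
  have := primitiveIic_nonneg hg0 (s + t)
  unfold gronwallTerm
  positivity

include hg0 in
theorem summable_gronwallTerm (ξ : ℝ) {η : ℝ} (hη : 0 ≤ η) :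
    Summable fun k => gronwallTerm g k ξ η := by
  have hx : 0 ≤ η * primitiveIic g (ξ + η) := mul_nonneg hη (primitiveIic_nonneg hg0 _)
  refine (Real.summable_pow_div_factorial (η * primitiveIic g (ξ + η))).of_nonneg_of_le
    (fun k => gronwallTerm_nonneg hg0 k ξ hη) fun k => ?_
  have hk : (1 : ℝ) ≤ k.factorial := by exact_mod_cast k.factorial_pos
  rw [gronwallTerm, ← mul_pow]
  exact div_le_div_of_nonneg_left (pow_nonneg hx k) (by positivity) (le_self_pow₀ hk two_ne_zero)

include hg0 hgi

theorem gronwallTerm_le (k : ℕ) {s ξ t η : ℝ} (hs : s ≤ ξ) (ht : 0 ≤ t) (htη : t ≤ η) :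
    gronwallTerm g k s t ≤ gronwallTerm g k ξ η := by
  have hF := primitiveIic_nonneg hg0 (s + t)
  have hη : 0 ≤ η := ht.trans htη
  unfold gronwallTerm
  gcongr
  exact primitiveIic_mono hg0 hgi (add_le_add hs htη)

theorem measurable_gronwallTerm (k : ℕ) : Measurable (Function.uncurry (gronwallTerm g k)) :=
  ((measurable_snd.pow_const k).mul (((primitiveIic_mono hg0 hgi).measurable.comp
    (measurable_fst.add measurable_snd)).pow_const k)).div_const _

theorem stripAdmissible_gronwallTerm (k : ℕ) : StripAdmissible (gronwallTerm g k) := by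
  refine ⟨(measurable_gronwallTerm hg0 hgi k).aestronglyMeasurable,
    fun A B => ⟨gronwallTerm g k A B, fun s hs t ht => ?_⟩⟩
  rw [abs_of_nonneg (gronwallTerm_nonneg hg0 k s ht.1.le)]
  exact gronwallTerm_le hg0 hgi k hs ht.1.le ht.2

theorem stripAdmissible_sum_gronwallTerm (n : ℕ) :
    StripAdmissible fun s t => ∑ k ∈ Finset.range n, gronwallTerm g k s t := by
  refine ⟨(Finset.measurable_sum _ fun k _ =>
      measurable_gronwallTerm hg0 hgi k).aestronglyMeasurable,
    fun A B => ⟨∑ k ∈ Finset.range n, gronwallTerm g k A B, fun s hs t ht => ?_⟩⟩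
  rw [abs_of_nonneg (Finset.sum_nonneg fun k _ => gronwallTerm_nonneg hg0 k s ht.1.le)]
  exact Finset.sum_le_sum fun k _ => gronwallTerm_le hg0 hgi k hs ht.1.le ht.2

theorem integrableOn_comp_add_box (ξ η : ℝ) :
    IntegrableOn (fun p : ℝ × ℝ => g (p.1 + p.2)) (Iic ξ ×ˢ Ioc 0 η) := by
  have hmeas := (aestronglyMeasurable_comp_add hgi).restrict (s := Iic ξ ×ˢ Ioc 0 η)
  rw [Measure.volume_eq_prod, ← Measure.prod_restrict] at hmeas
  rw [IntegrableOn, Measure.volume_eq_prod, ← Measure.prod_restrict]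
  refine (integrable_prod_iff' hmeas).2 ⟨Eventually.of_forall fun t => ?_, ?_⟩
  · have := (measurePreserving_add_right volume t).integrableOn_comp_preimage
      (measurableEmbedding_addRight t) (f := g) (s := Iic (ξ + t))
    rw [preimage_add_const_Iic, add_sub_cancel_right] at this
    exact this.2 (hgi _)
  · have hprim : (fun t => ∫ s in Iic ξ, ‖g (s + t)‖) = fun t => primitiveIic g (ξ + t) := by
      funext t
      simp only [Real.norm_of_nonneg (hg0 _)]
      exact integral_Iic_comp_add_right g ξ t
    rw [hprim]
    have hmono : Monotone fun t => primitiveIic g (ξ + t) :=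
      fun _ _ h => primitiveIic_mono hg0 hgi (add_le_add_right h ξ)
    exact (hmono.locallyIntegrable.integrableOn_isCompact isCompact_Icc).mono_set
      Ioc_subset_Icc_self

theorem StripAdmissible.integrableOn_box {f : ℝ → ℝ → ℝ} (hf : StripAdmissible f) (ξ η : ℝ) :
    IntegrableOn (fun p : ℝ × ℝ => g (p.1 + p.2) * f p.1 p.2) (Iic ξ ×ˢ Ioc 0 η) := by
  obtain ⟨M, hM⟩ := hf.2 ξ η
  refine ((integrableOn_comp_add_box hg0 hgi ξ η).const_mul |M|).mono'
    ((aestronglyMeasurable_comp_add hgi).restrict.mul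
      (hf.1.mono_measure (Measure.restrict_mono (Set.prod_mono (subset_univ _) Ioc_subset_Ioi_self)
        le_rfl))) ?_
  filter_upwards [ae_restrict_mem (measurableSet_Iic.prod measurableSet_Ioc)] with p hp
  rw [norm_mul, Real.norm_of_nonneg (hg0 _), mul_comm]
  exact mul_le_mul_of_nonneg_right ((hM _ hp.1 _ hp.2).trans (le_abs_self M)) (hg0 _)

theorem volterra_eq_setIntegral {f : ℝ → ℝ → ℝ} (hf : StripAdmissible f) (ξ : ℝ) {η : ℝ}
    (hη : 0 ≤ η) :
    volterra g f ξ η = ∫ p in Iic ξ ×ˢ Ioc 0 η, g (p.1 + p.2) * f p.1 p.2 := by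
  have hint := hf.integrableOn_box hg0 hgi ξ η
  rw [IntegrableOn, Measure.volume_eq_prod, ← Measure.prod_restrict] at hint
  rw [Measure.volume_eq_prod, ← Measure.prod_restrict, integral_prod _ hint, volterra]
  simp_rw [intervalIntegral.integral_of_le hη]

theorem volterra_add {f₁ f₂ : ℝ → ℝ → ℝ} (hf₁ : StripAdmissible f₁) (hf₂ : StripAdmissible f₂)
    (ξ : ℝ) {η : ℝ} (hη : 0 ≤ η) :
    volterra g (fun s t => f₁ s t + f₂ s t) ξ η = volterra g f₁ ξ η + volterra g f₂ ξ η := by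
  rw [volterra_eq_setIntegral hg0 hgi (hf₁.add hf₂) ξ hη, volterra_eq_setIntegral hg0 hgi hf₁ ξ hη,
    volterra_eq_setIntegral hg0 hgi hf₂ ξ hη, ← integral_add (hf₁.integrableOn_box hg0 hgi ξ η)
      (hf₂.integrableOn_box hg0 hgi ξ η)]
  simp_rw [mul_add]

theorem volterra_le_volterra {f₁ f₂ : ℝ → ℝ → ℝ} (hf₁ : StripAdmissible f₁)
    (hf₂ : StripAdmissible f₂) {ξ η : ℝ} (hη : 0 ≤ η)
    (h : ∀ s ≤ ξ, ∀ t ∈ Ioc (0 : ℝ) η, f₁ s t ≤ f₂ s t) :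
    volterra g f₁ ξ η ≤ volterra g f₂ ξ η := by
  rw [volterra_eq_setIntegral hg0 hgi hf₁ ξ hη, volterra_eq_setIntegral hg0 hgi hf₂ ξ hη]
  exact setIntegral_mono_on (hf₁.integrableOn_box hg0 hgi ξ η) (hf₂.integrableOn_box hg0 hgi ξ η)
    (measurableSet_Iic.prod measurableSet_Ioc) fun p hp =>
      mul_le_mul_of_nonneg_left (h _ hp.1 _ hp.2) (hg0 _)

theorem integral_Iic_mul_gronwallTerm (k : ℕ) (ξ t : ℝ) :
    ∫ s in Iic ξ, g (s + t) * gronwallTerm g k s t =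
      t ^ k / ((k + 1) * (k.factorial : ℝ) ^ 2) * primitiveIic g (ξ + t) ^ (k + 1) := by
  calc ∫ s in Iic ξ, g (s + t) * gronwallTerm g k s t
      = t ^ k / (k.factorial : ℝ) ^ 2 * ∫ s in Iic ξ, g (s + t) * primitiveIic g (s + t) ^ k := by
        rw [← integral_const_mul]
        congr 1 with s
        simp only [gronwallTerm]
        ring
    _ = _ := by
        rw [integral_Iic_comp_add_right (fun u => g u * primitiveIic g u ^ k),
          integral_mul_primitiveIic_pow hg0 hgi]
        field_simp

theorem setIntegral_box_mul_gronwallTerm_le (ξ : ℝ) {η : ℝ} (hη : 0 ≤ η) (k : ℕ) :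
    ∫ p in Iic ξ ×ˢ Ioc 0 η, g (p.1 + p.2) * gronwallTerm g k p.1 p.2 ≤
      gronwallTerm g (k + 1) ξ η := by
  have hint := (stripAdmissible_gronwallTerm hg0 hgi k).integrableOn_box hg0 hgi ξ η
  rw [IntegrableOn, Measure.volume_eq_prod, ← Measure.prod_restrict] at hint
  rw [Measure.volume_eq_prod, ← Measure.prod_restrict, integral_prod_symm _ hint]
  simp only [integral_Iic_mul_gronwallTerm hg0 hgi]
  set c : ℝ := (k + 1) * (k.factorial : ℝ) ^ 2
  calc ∫ t in Ioc 0 η, t ^ k / c * primitiveIic g (ξ + t) ^ (k + 1)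
      ≤ ∫ t in Ioc 0 η, t ^ k / c * primitiveIic g (ξ + η) ^ (k + 1) := by
        refine integral_mono_of_nonneg ?_
          (((continuous_pow k).div_const c).mul continuous_const).integrableOn_Ioc ?_
        all_goals
          filter_upwards [ae_restrict_mem measurableSet_Ioc] with t ht
          have := ht.1.le
          have := primitiveIic_nonneg hg0 (ξ + t)
        · positivity
        · gcongr
          exact primitiveIic_mono hg0 hgi (add_le_add_right ht.2 ξ)
    _ = gronwallTerm g (k + 1) ξ η := by
        rw [integral_mul_const, integral_div, ← intervalIntegral.integral_of_le hη, integral_pow,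
          gronwallTerm, Nat.factorial_succ]
        simp only [c]
        push_cast
        field_simp
        ring

theorem volterra_gronwallTerm_le (ξ : ℝ) {η : ℝ} (hη : 0 ≤ η) (k : ℕ) :
    volterra g (gronwallTerm g k) ξ η ≤ gronwallTerm g (k + 1) ξ η := by
  rw [volterra_eq_setIntegral hg0 hgi (stripAdmissible_gronwallTerm hg0 hgi k) ξ hη]
  exact setIntegral_box_mul_gronwallTerm_le hg0 hgi ξ hη k

theorem aestronglyMeasurable_volterra {f : ℝ → ℝ → ℝ} (hf : StripAdmissible f) :
    AEStronglyMeasurable (Function.uncurry (volterra g f))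
      (volume.restrict (univ ×ˢ Ioi (0 : ℝ))) := by
  set H : Set (ℝ × ℝ) := univ ×ˢ Ioi 0
  have hH : MeasurableSet H := MeasurableSet.univ.prod measurableSet_Ioi
  set S : Set ((ℝ × ℝ) × (ℝ × ℝ)) := {z | z.2 ∈ Iic z.1.1 ×ˢ Ioc 0 z.1.2}
  have hS : MeasurableSet S :=
    (measurableSet_le measurable_snd.fst measurable_fst.fst).inter
      ((measurableSet_lt measurable_const measurable_snd.snd).inter
        (measurableSet_le measurable_snd.snd measurable_fst.snd))
  set G : ℝ × ℝ → ℝ := fun p => g (p.1 + p.2) * H.indicator (Function.uncurry f) p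
  have hG : AEStronglyMeasurable G volume :=
    (aestronglyMeasurable_comp_add hgi).mul ((aestronglyMeasurable_indicator_iff hH).2 hf.1)
  have hK := (hG.comp_snd (μ := volume.restrict H)).indicator hS
  refine hK.integral_prod_right'.congr ?_
  filter_upwards [ae_restrict_mem hH] with q hq
  have hbox : ∀ p ∈ Iic q.1 ×ˢ Ioc 0 q.2, G p = g (p.1 + p.2) * f p.1 p.2 := fun p hp =>
    congrArg _ (indicator_of_mem (Set.prod_mono (subset_univ _) Ioc_subset_Ioi_self hp) _)
  rw [Function.uncurry_apply_pair, volterra_eq_setIntegral hg0 hgi hf _ hq.2.le,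
    ← setIntegral_congr_fun (measurableSet_Iic.prod measurableSet_Ioc) hbox,
    ← integral_indicator (measurableSet_Iic.prod measurableSet_Ioc)]
  rfl

theorem stripAdmissible_volterra {f : ℝ → ℝ → ℝ} (hf : StripAdmissible f) :
    StripAdmissible (volterra g f) := by
  refine ⟨aestronglyMeasurable_volterra hg0 hgi hf, fun A B => ?_⟩
  obtain ⟨M, hM⟩ := hf.2 A B
  refine ⟨|M| * gronwallTerm g 1 A B, fun ξ hξ η hη => ?_⟩
  have hbox := (stripAdmissible_gronwallTerm hg0 hgi 0).integrableOn_box hg0 hgi ξ η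
  rw [volterra_eq_setIntegral hg0 hgi hf ξ hη.1.le, ← Real.norm_eq_abs]
  calc ‖∫ p in Iic ξ ×ˢ Ioc 0 η, g (p.1 + p.2) * f p.1 p.2‖
      ≤ ∫ p in Iic ξ ×ˢ Ioc 0 η, |M| * (g (p.1 + p.2) * gronwallTerm g 0 p.1 p.2) := by
        refine norm_integral_le_of_norm_le (hbox.const_mul _) ?_
        filter_upwards [ae_restrict_mem (measurableSet_Iic.prod measurableSet_Ioc)] with p hp
        rw [gronwallTerm_zero, mul_one, norm_mul, Real.norm_of_nonneg (hg0 _), mul_comm]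
        exact mul_le_mul_of_nonneg_right
          ((hM _ (hp.1.trans hξ) _ ⟨hp.2.1, hp.2.2.trans hη.2⟩).trans (le_abs_self M)) (hg0 _)
    _ ≤ |M| * gronwallTerm g 1 ξ η := by
        rw [integral_const_mul]
        exact mul_le_mul_of_nonneg_left
          (setIntegral_box_mul_gronwallTerm_le hg0 hgi ξ hη.1.le 0) (abs_nonneg M)
    _ ≤ |M| * gronwallTerm g 1 A B :=
        mul_le_mul_of_nonneg_left (gronwallTerm_le hg0 hgi 1 hξ hη.1.le hη.2) (abs_nonneg M)

theorem StripAdmissible.iterate_volterra {f : ℝ → ℝ → ℝ} (hf : StripAdmissible f) (n : ℕ) :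
    StripAdmissible ((volterra g)^[n] f) := by
  induction n with
  | zero => exact hf
  | succ n ih =>
    rw [Function.iterate_succ_apply']
    exact stripAdmissible_volterra hg0 hgi ih

theorem one_add_volterra_sum_gronwallTerm_le (n : ℕ) (ξ : ℝ) {η : ℝ} (hη : 0 ≤ η) :
    1 + volterra g (fun s t => ∑ k ∈ Finset.range n, gronwallTerm g k s t) ξ η ≤
      ∑ k ∈ Finset.range (n + 1), gronwallTerm g k ξ η := by
  induction n with
  | zero => simp [volterra]
  | succ n ih =>
    simp_rw [Finset.sum_range_succ _ n]
    rw [volterra_add hg0 hgi (stripAdmissible_sum_gronwallTerm hg0 hgi n)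
      (stripAdmissible_gronwallTerm hg0 hgi n) ξ hη, Finset.sum_range_succ _ (n + 1)]
    linarith [volterra_gronwallTerm_le hg0 hgi ξ hη n]

theorem le_sum_gronwallTerm_add_volterra_iterate {m : ℝ → ℝ → ℝ} (hm : StripAdmissible m)
    (hineq : ∀ ξ η : ℝ, 0 ≤ η → m ξ η ≤ 1 + volterra g m ξ η) (n : ℕ) (ξ : ℝ) {η : ℝ}
    (hη : 0 ≤ η) :
    m ξ η ≤ ∑ k ∈ Finset.range n, gronwallTerm g k ξ η + (volterra g)^[n] m ξ η := by
  induction n generalizing ξ η with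
  | zero => simp
  | succ n ih =>
    have hsum := stripAdmissible_sum_gronwallTerm hg0 hgi n
    have hiter := hm.iterate_volterra hg0 hgi n
    calc m ξ η ≤ 1 + volterra g m ξ η := hineq ξ η hη
      _ ≤ 1 + volterra g (fun s t =>
            ∑ k ∈ Finset.range n, gronwallTerm g k s t + (volterra g)^[n] m s t) ξ η := by
          gcongr 1 + ?_
          exact volterra_le_volterra hg0 hgi hm (hsum.add hiter) hη
            fun s _ t ht => ih s ht.1.le
      _ = 1 + volterra g (fun s t => ∑ k ∈ Finset.range n, gronwallTerm g k s t) ξ η +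
            (volterra g)^[n + 1] m ξ η := by
          rw [volterra_add hg0 hgi hsum hiter ξ hη, Function.iterate_succ_apply', add_assoc]
      _ ≤ _ := by
          gcongr
          exact one_add_volterra_sum_gronwallTerm_le hg0 hgi n ξ hη

end Volterra

/-- Gronwall-type estimate: if `0 ≤ m ≤ 1 + Wm` for the Volterra operator
`(Wm)(ξ,η) = ∫_{-∞}^ξ ds ∫_0^η dt μ(s+t) m(s,t)` and the iteration converges
(`Wⁿm → 0` pointwise), then `m(ξ,η) ≤ 1 + ∑_{n≥1} ηⁿ μ₁(ξ+η)ⁿ/(n!)²`. -/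
theorem stmt_7 (μ : ℝ → ℝ) (hμ : ∀ x, 0 ≤ μ x)
    (hint : ∀ A : ℝ, IntegrableOn μ (Set.Iic A))
    (μ1 : ℝ → ℝ) (hμ1 : ∀ ξ, μ1 ξ = ∫ s in Set.Iic ξ, μ s)
    (W : (ℝ → ℝ → ℝ) → (ℝ → ℝ → ℝ))
    (hW : ∀ m ξ η, W m ξ η = ∫ s in Set.Iic ξ, ∫ t in (0 : ℝ)..η, μ (s + t) * m s t)
    (m : ℝ → ℝ → ℝ) (hm0 : ∀ ξ η, 0 ≤ m ξ η)
    (hmc : Continuous fun p : ℝ × ℝ => m p.1 p.2)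
    (hmb : ∀ A B : ℝ, ∃ M : ℝ, ∀ ξ ≤ A, ∀ η ∈ Set.Icc (0 : ℝ) B, m ξ η ≤ M)
    (hineq : ∀ ξ η : ℝ, 0 ≤ η → m ξ η ≤ 1 + W m ξ η)
    (hconv : ∀ ξ η : ℝ, 0 ≤ η →
      Filter.Tendsto (fun n => (W^[n] m) ξ η) Filter.atTop (nhds 0)) :
    ∀ ξ η : ℝ, 0 ≤ η →
      m ξ η ≤ 1 + ∑' n : ℕ,
        η ^ (n + 1) * (μ1 (ξ + η)) ^ (n + 1) / ((Nat.factorial (n + 1) : ℝ)) ^ 2 := by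
  obtain rfl : μ1 = primitiveIic μ := funext hμ1
  obtain rfl : W = volterra μ := funext fun f => funext fun ξ => funext (hW f ξ)
  have hm : StripAdmissible m := ⟨hmc.aestronglyMeasurable, fun A B =>
    (hmb A B).imp fun M hM s hs t ht =>
      (abs_of_nonneg (hm0 s t)).trans_le (hM s hs t ⟨ht.1.le, ht.2⟩)⟩
  intro ξ η hη
  have hsum := summable_gronwallTerm hμ ξ hη
  have hle := ge_of_tendsto' (hsum.hasSum.tendsto_sum_nat.add (hconv ξ η hη))
    fun n => le_sum_gronwallTerm_add_volterra_iterate hμ hint hm hineq n ξ hη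
  rwa [add_zero, hsum.tsum_eq_zero_add, gronwallTerm_zero] at hle
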